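/- Let η, ξ₁ ∈ ℂ with sinh η ≠ 0 and sinh 2η ≠ 0, and take L = 2 with inhomogeneities w₁ = ξ₁, w₂ = ξ₁ − η. For all λ ∈ ℂ with sinh(λ−ξ₁+η) ≠ 0 and sinh(λ−ξ₁+2η) ≠ 0, the transfer matrix A(λ)+D(λ) of the homogeneous-grading monodromy matrix on (ℂ²)^{⊗2} preserves the two-dimensional one-down-spin sector span{|01⟩, |10⟩}, its restriction there is the matrix [[b(λ−w₁)+b(λ−w₂), c⁺(λ−w₁)c⁻(λ−w₂)], [c⁻(λ−w₁)c⁺(λ−w₂), b(λ−w₁)+b(λ−w₂)]], and the determinant of this restriction equals 4 sinh(λ−ξ₁)/sinh(λ−ξ₁+2η); in particular it vanishes at λ = ξ₁, so the transfer matrix is non-regular there. -/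

import Mathlib

noncomputable section

/-- The q-integer `[n]_q = (qⁿ − q⁻ⁿ)/(q − q⁻¹)`. -/
def qint (q : ℂ) (n : ℕ) : ℂ := (q ^ (n : ℤ) - q ^ (-(n : ℤ))) / (q - q⁻¹)

/-- The q-factorial `[n]_q! = ∏_{m=1}^n [m]_q`. -/
def qfact (q : ℂ) (n : ℕ) : ℂ := ∏ m ∈ Finset.range n, qint q (m + 1)

/-- The q-binomial coefficient `[l choose n]_q`. -/
def qbinom (q : ℂ) (l n : ℕ) : ℂ := qfact q l / (qfact q (l - n) * qfact q n)
/-- `b(u) = sinh u / sinh(u+η)`. -/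
def bC (η u : ℂ) : ℂ := Complex.sinh u / Complex.sinh (u + η)

/-- `c⁺(u) = e^{u} sinh η / sinh(u+η)`. -/
def cP (η u : ℂ) : ℂ := Complex.exp u * Complex.sinh η / Complex.sinh (u + η)

/-- `c⁻(u) = e^{−u} sinh η / sinh(u+η)`. -/
def cM (η u : ℂ) : ℂ := Complex.exp (-u) * Complex.sinh η / Complex.sinh (u + η)

/-- The homogeneous-grading R-matrix `R⁺(u)` on `ℂ² ⊗ ℂ²`: identity on `|00⟩`, `|11⟩`,
and `[[b, c⁻],[c⁺, b]]` on `span{|01⟩, |10⟩}`. -/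
def Rplus (η u : ℂ) : Matrix (Fin 2 × Fin 2) (Fin 2 × Fin 2) ℂ :=
  Matrix.of fun p p' =>
    if p = p' then (if p.1 = p.2 then 1 else bC η u)
    else if p.1 = 0 ∧ p.2 = 1 ∧ p'.1 = 1 ∧ p'.2 = 0 then cM η u
    else if p.1 = 1 ∧ p.2 = 0 ∧ p'.1 = 0 ∧ p'.2 = 1 then cP η u
    else 0

/-- The principal-grading (symmetric) R-matrix `R^p(u)`: identity on `|00⟩`, `|11⟩`,
and `[[b, c],[c, b]]` on `span{|01⟩, |10⟩}` with `c(u) = sinh η / sinh(u+η)`. -/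
def Rprin (η u : ℂ) : Matrix (Fin 2 × Fin 2) (Fin 2 × Fin 2) ℂ :=
  Matrix.of fun p p' =>
    if p = p' then (if p.1 = p.2 then 1 else bC η u)
    else if (p.1 = 0 ∧ p.2 = 1 ∧ p'.1 = 1 ∧ p'.2 = 0) ∨
            (p.1 = 1 ∧ p.2 = 0 ∧ p'.1 = 0 ∧ p'.2 = 1) then
      Complex.sinh η / Complex.sinh (u + η)
    else 0

/-- A 4×4 R-matrix acting on the pair (auxiliary space 0, quantum site j), identity on
the other sites. -/
def Rsite {S : Type*} [DecidableEq S] [Fintype S]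
    (R2 : Matrix (Fin 2 × Fin 2) (Fin 2 × Fin 2) ℂ) (j : S) :
    Matrix (Fin 2 × (S → Fin 2)) (Fin 2 × (S → Fin 2)) ℂ :=
  Matrix.of fun p p' =>
    if ∀ k, k ≠ j → p.2 k = p'.2 k then R2 (p.1, p.2 j) (p'.1, p'.2 j) else 0

/-- The monodromy matrix `T(λ) = R_{0,L}(λ−w_L) ⋯ R_{0,1}(λ−w_1)`, where `sites` lists
the sites `1,…,L` in increasing order. -/
def monodromy {S : Type*} [DecidableEq S] [Fintype S]
    (R2 : ℂ → Matrix (Fin 2 × Fin 2) (Fin 2 × Fin 2) ℂ)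
    (sites : List S) (w : S → ℂ) (lam : ℂ) :
    Matrix (Fin 2 × (S → Fin 2)) (Fin 2 × (S → Fin 2)) ℂ :=
  ((sites.map fun j => Rsite (R2 (lam - w j)) j).reverse).prod

/-- The auxiliary-space block entry of a monodromy matrix: `T_{a,b}` acting on the
quantum space (so `A = T_{0,0}`, `B = T_{0,1}`, `C = T_{1,0}`, `D = T_{1,1}`). -/
def entryT {S : Type*} (T : Matrix (Fin 2 × (S → Fin 2)) (Fin 2 × (S → Fin 2)) ℂ)
    (a b : Fin 2) : Matrix (S → Fin 2) (S → Fin 2) ℂ :=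
  Matrix.of fun ε ε' => T (a, ε) (b, ε')

/-- The number of down spins of a configuration. -/
def dcount {S : Type*} [Fintype S] [DecidableEq S] (ε : S → Fin 2) : ℕ :=
  (Finset.univ.filter fun s => ε s = 1).card

/-- The list of sites of the blocked chain in increasing (lexicographic) order. -/
def sitesList (l Ns : ℕ) : List (Fin Ns × Fin l) :=
  (List.finRange Ns).flatMap fun b => (List.finRange l).map fun β => (b, β)

/-!
The R-matrix `R⁺` conserves the number of down spins (ice rule), hence so does every factor
`R⁺_{0j}` of the monodromy matrix on auxiliary ⊗ quantum space, and the transfer matrix is block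
diagonal in the number of down spins. For `L = 2` the one-down-spin block is read off by summing
over the intermediate auxiliary state. With `u = λ - ξ₁` the spectral parameter at the second site
is `u + η`, and `sinh u sinh (u + 2η) = sinh² (u + η) - sinh² η` collapses the determinant to
`4 sinh u / sinh (u + 2η)`, which vanishes at `λ = ξ₁`.
-/

section PreservesWeight

variable {ι R : Type*}

def Matrix.PreservesWeight [Zero R] (wt : ι → ℕ) (M : Matrix ι ι R) : Prop :=
  ∀ ⦃i j⦄, wt i ≠ wt j → M i j = 0

namespace Matrix.PreservesWeight

variable {wt : ι → ℕ}

theorem one [DecidableEq ι] [Zero R] [One R] : (1 : Matrix ι ι R).PreservesWeight wt :=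
  fun _ _ h => Matrix.one_apply_ne fun hij => h (congrArg wt hij)

theorem mul [Fintype ι] [NonUnitalNonAssocSemiring R] {M N : Matrix ι ι R}
    (hM : M.PreservesWeight wt) (hN : N.PreservesWeight wt) : (M * N).PreservesWeight wt := by
  intro i j hij
  refine Finset.sum_eq_zero fun k _ => ?_
  by_cases hik : wt i = wt k
  · exact mul_eq_zero_of_right _ (hN (hik ▸ hij))
  · exact mul_eq_zero_of_left (hM hik) _

theorem list_prod [Fintype ι] [DecidableEq ι] [Semiring R] {l : List (Matrix ι ι R)}
    (hl : ∀ M ∈ l, M.PreservesWeight wt) : l.prod.PreservesWeight wt := by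
  induction l with
  | nil => exact one
  | cons M l ih =>
    rw [List.prod_cons]
    exact (hl M List.mem_cons_self).mul (ih fun N hN => hl N (List.mem_cons_of_mem M hN))

theorem mulVec_eq_zero [Fintype ι] [NonUnitalNonAssocSemiring R] {M : Matrix ι ι R}
    (hM : M.PreservesWeight wt) {n : ℕ} {v : ι → R} (hv : ∀ j, wt j ≠ n → v j = 0) {i : ι}
    (hi : wt i ≠ n) : (M *ᵥ v) i = 0 := by
  refine Finset.sum_eq_zero fun j _ => ?_
  by_cases hj : wt j = n
  · exact mul_eq_zero_of_left (hM (hj ▸ hi)) _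
  · exact mul_eq_zero_of_right _ (hv j hj)

end Matrix.PreservesWeight

end PreservesWeight

section SpinConservation

variable {S : Type*} [DecidableEq S] [Fintype S]

theorem dcount_eq_sum (ε : S → Fin 2) : dcount ε = ∑ s, (ε s : ℕ) := by
  rw [dcount, Finset.card_filter]
  refine Finset.sum_congr rfl fun s _ => ?_
  generalize ε s = x
  fin_cases x <;> rfl

theorem dcount_add_eq_of_eqOn_compl {ε ε' : S → Fin 2} (j : S) (h : ∀ k, k ≠ j → ε k = ε' k) :
    dcount ε + ε' j = dcount ε' + ε j := by
  have hrest : ∑ k ∈ Finset.univ.erase j, (ε k : ℕ) = ∑ k ∈ Finset.univ.erase j, (ε' k : ℕ) :=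
    Finset.sum_congr rfl fun k hk => by rw [h k (Finset.ne_of_mem_erase hk)]
  simp only [dcount_eq_sum, ← Finset.add_sum_erase _ _ (Finset.mem_univ j), hrest]
  ring

def totalDcount (p : Fin 2 × (S → Fin 2)) : ℕ := p.1 + dcount p.2

theorem Rsite_preservesWeight {R2 : Matrix (Fin 2 × Fin 2) (Fin 2 × Fin 2) ℂ}
    (hR : R2.PreservesWeight fun p => p.1 + p.2) (j : S) :
    (Rsite R2 j).PreservesWeight totalDcount := by
  rintro ⟨a, ε⟩ ⟨b, ε'⟩ hne
  simp only [Rsite, Matrix.of_apply]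
  split_ifs with hrest
  · refine hR fun hloc => hne ?_
    have := dcount_add_eq_of_eqOn_compl j hrest
    simp only [totalDcount] at hloc ⊢
    omega
  · rfl

theorem monodromy_preservesWeight {R2 : ℂ → Matrix (Fin 2 × Fin 2) (Fin 2 × Fin 2) ℂ}
    (hR : ∀ u, (R2 u).PreservesWeight fun p => p.1 + p.2) (sites : List S) (w : S → ℂ)
    (lam : ℂ) : (monodromy R2 sites w lam).PreservesWeight totalDcount := by
  refine Matrix.PreservesWeight.list_prod fun M hM => ?_
  obtain ⟨j, -, rfl⟩ := List.mem_map.mp (List.mem_reverse.mp hM)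
  exact Rsite_preservesWeight (hR _) j

def transferMatrix (R2 : ℂ → Matrix (Fin 2 × Fin 2) (Fin 2 × Fin 2) ℂ) (sites : List S)
    (w : S → ℂ) (lam : ℂ) : Matrix (S → Fin 2) (S → Fin 2) ℂ :=
  entryT (monodromy R2 sites w lam) 0 0 + entryT (monodromy R2 sites w lam) 1 1

theorem transferMatrix_preservesWeight {R2 : ℂ → Matrix (Fin 2 × Fin 2) (Fin 2 × Fin 2) ℂ}
    (hR : ∀ u, (R2 u).PreservesWeight fun p => p.1 + p.2) (sites : List S) (w : S → ℂ)
    (lam : ℂ) : (transferMatrix R2 sites w lam).PreservesWeight dcount := by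
  intro ε ε' hne
  have hT := monodromy_preservesWeight hR sites w lam
  simp only [transferMatrix, Matrix.add_apply, entryT, Matrix.of_apply]
  rw [hT (i := (0, ε)) (j := (0, ε')), hT (i := (1, ε)) (j := (1, ε')), add_zero] <;>
    simpa [totalDcount] using hne

end SpinConservation

theorem Rplus_preservesWeight (η u : ℂ) :
    (Rplus η u).PreservesWeight fun p => p.1 + p.2 := by
  rintro ⟨a, x⟩ ⟨b, y⟩ hne
  fin_cases a <;> fin_cases x <;> fin_cases b <;> fin_cases y <;> simp_all [Rplus]

section TwoSites

variable (R2 : ℂ → Matrix (Fin 2 × Fin 2) (Fin 2 × Fin 2) ℂ) (w : Fin 2 → ℂ) (lam : ℂ)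

theorem monodromy_finRange_two :
    monodromy R2 (List.finRange 2) w lam
      = Rsite (R2 (lam - w 1)) 1 * Rsite (R2 (lam - w 0)) 0 := by
  simp [monodromy, List.finRange_succ]

theorem Rsite_one_mul_Rsite_zero_apply (R₁ R₂ : Matrix (Fin 2 × Fin 2) (Fin 2 × Fin 2) ℂ)
    (a b x y x' y' : Fin 2) :
    (Rsite R₂ (1 : Fin 2) * Rsite R₁ (0 : Fin 2)) (a, ![x, y]) (b, ![x', y'])
      = ∑ c, R₂ (a, y) (c, y') * R₁ (c, x) (b, x') := by
  simp only [Matrix.mul_apply, Fintype.sum_prod_type]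
  refine Finset.sum_congr rfl fun c _ => ?_
  rw [Finset.sum_eq_single ![x, y']]
  · simp [Rsite, Fin.forall_fin_two]
  · intro ε _ hε
    have hdiff : ε 0 ≠ x ∨ ε 1 ≠ y' := by
      by_contra! h
      exact hε (funext fun k => by fin_cases k <;> simp [h.1, h.2])
    rcases hdiff with h | h <;> simp [Rsite, Fin.forall_fin_two, h, Ne.symm h]
  · simp

theorem transferMatrix_two_apply (x y x' y' : Fin 2) :
    transferMatrix R2 (List.finRange 2) w lam ![x, y] ![x', y']
      = ∑ a, ∑ c, R2 (lam - w 1) (a, y) (c, y') * R2 (lam - w 0) (c, x) (a, x') := by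
  simp only [transferMatrix, Matrix.add_apply, entryT, Matrix.of_apply,
    monodromy_finRange_two, Rsite_one_mul_Rsite_zero_apply, Fin.sum_univ_two]

end TwoSites

theorem transferMatrix_Rplus_two (η lam : ℂ) (w : Fin 2 → ℂ) :
    let tr := transferMatrix (Rplus η) (List.finRange 2) w lam
    tr ![0, 1] ![0, 1] = bC η (lam - w 0) + bC η (lam - w 1)
      ∧ tr ![0, 1] ![1, 0] = cP η (lam - w 0) * cM η (lam - w 1)
      ∧ tr ![1, 0] ![0, 1] = cM η (lam - w 0) * cP η (lam - w 1)
      ∧ tr ![1, 0] ![1, 0] = bC η (lam - w 0) + bC η (lam - w 1) := by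
  refine ⟨?_, ?_, ?_, ?_⟩ <;>
    simp [transferMatrix_two_apply, Rplus, Fin.sum_univ_two, Prod.ext_iff] <;> ring

section Determinant

open Complex

theorem Complex.sinh_sub_mul_sinh_add (x y : ℂ) :
    sinh (x - y) * sinh (x + y) = sinh x ^ 2 - sinh y ^ 2 := by
  rw [sinh_sub, sinh_add]
  linear_combination sinh x ^ 2 * cosh_sq_sub_sinh_sq y - sinh y ^ 2 * cosh_sq_sub_sinh_sq x

theorem cP_mul_cM (η u : ℂ) : cP η u * cM η u = sinh η ^ 2 / sinh (u + η) ^ 2 := by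
  rw [cP, cM, exp_neg]
  field_simp [exp_ne_zero]

theorem det_oneDown_Rplus (η u : ℂ) (h₁ : sinh (u + η) ≠ 0) (h₂ : sinh (u + 2 * η) ≠ 0) :
    (bC η u + bC η (u + η)) * (bC η u + bC η (u + η))
      - cP η u * cM η (u + η) * (cM η u * cP η (u + η))
      = 4 * sinh u / sinh (u + 2 * η) := by
  have hshift : u + η + η = u + 2 * η := by ring
  have hkey := sinh_sub_mul_sinh_add (u + η) η
  rw [add_sub_cancel_right, hshift] at hkey
  calc _ = (bC η u + bC η (u + η)) ^ 2 - cP η u * cM η u * (cP η (u + η) * cM η (u + η)) := by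
        ring
    _ = 4 * sinh u / sinh (u + 2 * η) := by
      rw [cP_mul_cM, cP_mul_cM, bC, bC, hshift]
      -- with `s₀ s₂ = s₁² - sinh² η` the numerator is `(2 s₁² - sinh² η)² - sinh⁴ η = 4 s₁² s₀ s₂`
      generalize sinh u = s₀, sinh (u + η) = s₁, sinh (u + 2 * η) = s₂ at *
      field_simp
      linear_combination (s₀ * s₂ - s₁ ^ 2 - sinh η ^ 2) * hkey

theorem transferMatrix_Rplus_two_det (η ξ lam : ℂ) (h₁ : sinh (lam - ξ + η) ≠ 0)
    (h₂ : sinh (lam - ξ + 2 * η) ≠ 0) :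
    let tr := transferMatrix (Rplus η) (List.finRange 2) ![ξ, ξ - η] lam
    tr ![0, 1] ![0, 1] * tr ![1, 0] ![1, 0] - tr ![0, 1] ![1, 0] * tr ![1, 0] ![0, 1]
      = 4 * sinh (lam - ξ) / sinh (lam - ξ + 2 * η) := by
  obtain ⟨h0101, h0110, h1001, h1010⟩ := transferMatrix_Rplus_two η lam ![ξ, ξ - η]
  intro tr
  simp only [tr, h0101, h0110, h1001, h1010, Matrix.cons_val_zero, Matrix.cons_val_one,
    show lam - (ξ - η) = lam - ξ + η by ring]
  exact det_oneDown_Rplus η (lam - ξ) h₁ h₂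

end Determinant

/-- For `L = 2` with inhomogeneities `w₁ = ξ₁`, `w₂ = ξ₁ − η`, the
transfer matrix `A(λ)+D(λ)` preserves the one-down-spin sector `span{|01⟩,|10⟩}`; its
restriction there is `[[b₁+b₂, c⁺₁c⁻₂],[c⁻₁c⁺₂, b₁+b₂]]`, the determinant of the
restriction equals `4 sinh(λ−ξ₁)/sinh(λ−ξ₁+2η)`, and in particular it vanishes at
`λ = ξ₁` (non-regularity of the transfer matrix). -/
theorem transfer_nonregular_L2 (η ξ₁ : ℂ)
    (hη : Complex.sinh η ≠ 0) (hη2 : Complex.sinh (2 * η) ≠ 0) :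
    (∀ lam : ℂ, Complex.sinh (lam - ξ₁ + η) ≠ 0 → Complex.sinh (lam - ξ₁ + 2 * η) ≠ 0 →
      (let w : Fin 2 → ℂ := ![ξ₁, ξ₁ - η]
       let T := monodromy (Rplus η) (List.finRange 2) w lam
       let tr := entryT T 0 0 + entryT T 1 1
       let e01 : Fin 2 → Fin 2 := fun k => if k = 1 then 1 else 0
       let e10 : Fin 2 → Fin 2 := fun k => if k = 0 then 1 else 0
       (∀ v : (Fin 2 → Fin 2) → ℂ, (∀ ε, dcount ε ≠ 1 → v ε = 0) →
          ∀ ε, dcount ε ≠ 1 → tr.mulVec v ε = 0)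
       ∧ tr e01 e01 = bC η (lam - ξ₁) + bC η (lam - (ξ₁ - η))
       ∧ tr e01 e10 = cP η (lam - ξ₁) * cM η (lam - (ξ₁ - η))
       ∧ tr e10 e01 = cM η (lam - ξ₁) * cP η (lam - (ξ₁ - η))
       ∧ tr e10 e10 = bC η (lam - ξ₁) + bC η (lam - (ξ₁ - η))
       ∧ tr e01 e01 * tr e10 e10 - tr e01 e10 * tr e10 e01
           = 4 * Complex.sinh (lam - ξ₁) / Complex.sinh (lam - ξ₁ + 2 * η)))
    ∧ (let w : Fin 2 → ℂ := ![ξ₁, ξ₁ - η]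
       let T := monodromy (Rplus η) (List.finRange 2) w ξ₁
       let tr := entryT T 0 0 + entryT T 1 1
       let e01 : Fin 2 → Fin 2 := fun k => if k = 1 then 1 else 0
       let e10 : Fin 2 → Fin 2 := fun k => if k = 0 then 1 else 0
       tr e01 e01 * tr e10 e10 - tr e01 e10 * tr e10 e01 = 0) := by
  have he01 : (fun k : Fin 2 => if k = 1 then (1 : Fin 2) else 0) = ![0, 1] := by
    funext k; fin_cases k <;> rfl
  have he10 : (fun k : Fin 2 => if k = 0 then (1 : Fin 2) else 0) = ![1, 0] := by
    funext k; fin_cases k <;> rfl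
  simp only [he01, he10]
  refine ⟨fun lam h₁ h₂ => ?_, ?_⟩
  · obtain ⟨h0101, h0110, h1001, h1010⟩ := transferMatrix_Rplus_two η lam ![ξ₁, ξ₁ - η]
    refine ⟨fun v hv ε hε => ?_, h0101, h0110, h1001, h1010,
      transferMatrix_Rplus_two_det η ξ₁ lam h₁ h₂⟩
    exact (transferMatrix_preservesWeight (Rplus_preservesWeight η) _ _ lam).mulVec_eq_zero hv hε
  · refine (transferMatrix_Rplus_two_det η ξ₁ ξ₁ ?_ ?_).trans ?_ <;> simp [hη, hη2]
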